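/- Koksma's inequality in dimension one: if f : [0,1] → ℝ has bounded variation V(f), then for any points x_1, ..., x_N ∈ [0,1], |(1/N) ∑_{i=1}^N f(x_i) − ∫_0^1 f(x) dx| ≤ V(f) · D*_N({x_1,...,x_N}). -/

import Mathlib

/-!
Sort the points and pad them to `0 = z 0 ≤ z 1 ≤ ⋯ ≤ z (N + 1) = 1`. The star discrepancy `D`
controls both `|k / N - z k|` and `|k / N - z (k + 1)|`. For monotone `g`, summation by parts
writes `(1 / N) ∑ g (z (k + 1))` as a sum over the intervals `[z k, z (k + 1)]` of two-point
quadratures with node `k / N`; on each interval the quadrature differs from `∫ g` by at most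
`D (g (z (k + 1)) - g (z k))`, and these bounds telescope to `D (g 1 - g 0)`. A function of
bounded variation is `P - Q` with `P, Q` monotone and `(P 1 - P 0) + (Q 1 - Q 0) = V(f)`.
-/

open scoped Classical

/-- One-dimensional star discrepancy of the points `x 1, ..., x N`:
the supremum over `u ∈ (0,1]` of `|#{i : x i < u}/N - u|`. -/
noncomputable def starDisc1 (N : ℕ) (x : Fin N → ℝ) : ℝ :=
  ⨆ u : Set.Ioc (0 : ℝ) 1,
    |((Finset.univ.filter (fun i => x i < (u : ℝ))).card : ℝ) / N - (u : ℝ)|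

open MeasureTheory Finset

section Discrepancy

variable {N : ℕ}

lemma starDisc1_comp_perm (x : Fin N → ℝ) (σ : Equiv.Perm (Fin N)) :
    starDisc1 N (x ∘ σ) = starDisc1 N x := by
  unfold starDisc1
  congr! 6 with u
  exact card_equiv σ (by simp)

lemma abs_card_div_sub_le_starDisc1 (x : Fin N → ℝ) {u : ℝ} (hu : u ∈ Set.Ioc 0 1) :
    |(#{i | x i < u} : ℝ) / N - u| ≤ starDisc1 N x := by
  refine le_ciSup (f := fun u : Set.Ioc (0 : ℝ) 1 => |(#{i | x i < (u : ℝ)} : ℝ) / N - u|)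
    ⟨1, ?_⟩ ⟨u, hu⟩
  rintro _ ⟨⟨v, hv0, hv1⟩, rfl⟩
  have hfrac : (#{i | x i < v} : ℝ) / N ≤ 1 :=
    div_le_one_of_le₀ (by exact_mod_cast (card_filter_le _ _).trans (card_fin N).le) N.cast_nonneg
  have : 0 ≤ (#{i | x i < v} : ℝ) / N := by positivity
  exact abs_le.2 ⟨by linarith, by linarith⟩

lemma starDisc1_nonneg (x : Fin N → ℝ) : 0 ≤ starDisc1 N x :=
  (abs_nonneg _).trans (abs_card_div_sub_le_starDisc1 x ⟨one_pos, le_rfl⟩)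

lemma Monotone.succ_le_card_filter_lt {α : Type*} [Preorder α] {y : Fin N → α}
    (hy : Monotone y) {k : Fin N} {u : α} (h : y k < u) : (k : ℕ) + 1 ≤ #{i | y i < u} := by
  rw [← Fin.card_Iic]
  exact card_le_card fun i hi => mem_filter.2 ⟨mem_univ i, (hy (mem_Iic.1 hi)).trans_lt h⟩

lemma Monotone.card_filter_lt_le {α : Type*} [Preorder α] {y : Fin N → α}
    (hy : Monotone y) {k : Fin N} {u : α} (h : u ≤ y k) : #{i | y i < u} ≤ k := by
  rw [← Fin.card_Iio]
  refine card_le_card fun i hi => mem_Iio.2 (lt_of_not_ge fun hki => ?_)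
  exact (mem_filter.1 hi).2.not_ge (h.trans (hy hki))

lemma Monotone.succ_div_sub_le_starDisc1 {y : Fin N → ℝ} (hy : Monotone y) {k : Fin N}
    (hk : 0 ≤ y k) : ((k : ℝ) + 1) / N - y k ≤ starDisc1 N y := by
  have hkN : ((k : ℝ) + 1) / N ≤ 1 :=
    div_le_one_of_le₀ (by exact_mod_cast k.isLt) N.cast_nonneg
  rcases le_or_gt 1 (y k) with h1 | h1
  · linarith [starDisc1_nonneg y]
  rw [sub_le_comm]
  -- the count `#{i | y i < u}` exceeds `k` only for `u > y k`, so approach `y k` from above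
  refine le_of_forall_gt_imp_ge_of_dense fun a ha => ?_
  have hu : min a 1 ∈ Set.Ioc 0 1 := ⟨lt_min (hk.trans_lt ha) one_pos, min_le_right _ _⟩
  have hcount : ((k : ℝ) + 1) / N ≤ (#{i | y i < min a 1} : ℝ) / N := by
    gcongr
    exact_mod_cast hy.succ_le_card_filter_lt (lt_min ha h1)
  have hdisc := (le_abs_self _).trans (abs_card_div_sub_le_starDisc1 y hu)
  linarith [min_le_left a 1]

lemma Monotone.sub_div_le_starDisc1 {y : Fin N → ℝ} (hy : Monotone y) {k : Fin N}
    (hk : y k ≤ 1) : y k - (k : ℝ) / N ≤ starDisc1 N y := by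
  rcases le_or_gt (y k) 0 with h0 | h0
  · linarith [starDisc1_nonneg y, show 0 ≤ (k : ℝ) / N by positivity]
  have hcount : (#{i | y i < y k} : ℝ) / N ≤ (k : ℝ) / N := by
    gcongr
    exact_mod_cast hy.card_filter_lt_le le_rfl
  have hdisc := (neg_abs_le _).trans' (neg_le_neg (abs_card_div_sub_le_starDisc1 y ⟨h0, hk⟩))
  linarith

end Discrepancy

section Padding

variable {N : ℕ}

/-- The points `0, y 0, …, y (N - 1), 1, 1, …`, so that index `i + 1` holds `y i`. -/
def padPoints (y : Fin N → ℝ) : ℕ → ℝ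
  | 0 => 0
  | i + 1 => if h : i < N then y ⟨i, h⟩ else 1

variable (y : Fin N → ℝ)

@[simp]
lemma padPoints_zero : padPoints y 0 = 0 := rfl

lemma padPoints_succ (i : Fin N) : padPoints y (i + 1) = y i := dif_pos i.isLt

@[simp]
lemma padPoints_succ_self : padPoints y (N + 1) = 1 := dif_neg (lt_irrefl N)

variable {y}

lemma padPoints_mem_Icc (hy : ∀ i, y i ∈ Set.Icc 0 1) (i : ℕ) : padPoints y i ∈ Set.Icc 0 1 := by
  rcases i with _ | i
  · simp
  · dsimp only [padPoints]
    split_ifs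
    exacts [hy _, by simp]

lemma monotone_padPoints (hy : Monotone y) (hy01 : ∀ i, y i ∈ Set.Icc 0 1) :
    Monotone (padPoints y) := by
  refine monotone_nat_of_le_succ fun i => ?_
  rcases i with _ | i
  · exact (padPoints_mem_Icc hy01 1).1
  by_cases hi : i + 1 < N
  · rw [padPoints_succ y ⟨i, by omega⟩, padPoints_succ y ⟨i + 1, hi⟩]
    exact hy (Fin.mk_le_mk.2 i.le_succ)
  · simp only [padPoints, dif_neg hi]
    exact (padPoints_mem_Icc hy01 (i + 1)).2

lemma abs_div_sub_padPoints_le (hy : Monotone y) (hy01 : ∀ i, y i ∈ Set.Icc 0 1) {k : ℕ}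
    (hk : k ≤ N) : |(k : ℝ) / N - padPoints y k| ≤ starDisc1 N y := by
  rcases k with _ | j
  · simpa using starDisc1_nonneg y
  rw [padPoints_succ y ⟨j, by omega⟩, Nat.cast_succ, abs_le]
  have hsucc := hy.succ_div_sub_le_starDisc1 (k := ⟨j, by omega⟩) (hy01 _).1
  have hsub := hy.sub_div_le_starDisc1 (k := ⟨j, by omega⟩) (hy01 _).2
  have hmono : (j : ℝ) / N ≤ ((j : ℝ) + 1) / N := by gcongr; linarith
  exact ⟨by linarith, by linarith⟩

lemma abs_div_sub_padPoints_succ_le (hN : N ≠ 0) (hy : Monotone y)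
    (hy01 : ∀ i, y i ∈ Set.Icc 0 1) {k : ℕ} (hk : k ≤ N) :
    |(k : ℝ) / N - padPoints y (k + 1)| ≤ starDisc1 N y := by
  rcases hk.lt_or_eq with hk | rfl
  · rw [padPoints_succ y ⟨k, hk⟩, abs_le]
    have hsucc := hy.succ_div_sub_le_starDisc1 (k := ⟨k, hk⟩) (hy01 _).1
    have hsub := hy.sub_div_le_starDisc1 (k := ⟨k, hk⟩) (hy01 _).2
    have hmono : (k : ℝ) / N ≤ ((k : ℝ) + 1) / N := by gcongr; linarith
    exact ⟨by linarith, by linarith⟩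
  · simpa [div_self ((Nat.cast_ne_zero (R := ℝ)).2 hN)] using starDisc1_nonneg y

end Padding

lemma sum_range_natCast_mul_sub {R : Type*} [CommRing R] (a : ℕ → R) (n : ℕ) :
    ∑ k ∈ range n, (k : R) * (a (k + 1) - a k) = n * a n - ∑ k ∈ range n, a (k + 1) := by
  induction n with
  | zero => simp
  | succ n ih =>
    rw [sum_range_succ, ih, sum_range_succ]
    push_cast
    ring

lemma sum_two_point_padPoints {N : ℕ} (hN : N ≠ 0) (y : Fin N → ℝ) (g : ℝ → ℝ) :
    ∑ k ∈ range (N + 1), (((k : ℝ) / N - padPoints y k) * g (padPoints y k) +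
      (padPoints y (k + 1) - k / N) * g (padPoints y (k + 1))) = (1 / N) * ∑ i, g (y i) := by
  set z := padPoints y with hz
  have hsum : ∑ i, g (y i) = ∑ k ∈ range N, g (z (k + 1)) := by
    rw [← Fin.sum_univ_eq_sum_range (fun k => g (z (k + 1)))]
    exact sum_congr rfl fun i _ => by rw [hz, padPoints_succ y i]
  calc _ = ∑ k ∈ range (N + 1), (z (k + 1) * g (z (k + 1)) - z k * g (z k)) -
        (1 / N) * ∑ k ∈ range (N + 1), (k : ℝ) * (g (z (k + 1)) - g (z k)) := by
        rw [mul_sum, ← sum_sub_distrib]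
        exact sum_congr rfl fun k _ => by ring
    _ = g 1 - (1 / N) * ((N + 1) * g 1 - ∑ k ∈ range (N + 1), g (z (k + 1))) := by
        rw [sum_range_sub (fun k => z k * g (z k)), sum_range_natCast_mul_sub (fun k => g (z k))]
        simp [hz]
    _ = (1 / N) * ∑ i, g (y i) := by
        rw [sum_range_succ, ← hsum, hz, padPoints_succ_self]
        field_simp
        ring

lemma abs_integral_sub_two_point_le_of_monotoneOn {g : ℝ → ℝ} {a b c M : ℝ} (hab : a ≤ b)
    (hg : MonotoneOn g (Set.Icc a b)) (hca : |c - a| ≤ M) (hcb : |c - b| ≤ M) :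
    |(∫ t in a..b, g t) - ((c - a) * g a + (b - c) * g b)| ≤ M * (g b - g a) := by
  have ha : a ∈ Set.Icc a b := ⟨le_rfl, hab⟩
  have hb : b ∈ Set.Icc a b := ⟨hab, le_rfl⟩
  have hgab : 0 ≤ g b - g a := sub_nonneg.2 (hg ha hb hab)
  have hint : IntervalIntegrable g volume a b :=
    MonotoneOn.intervalIntegrable (by rwa [Set.uIcc_of_le hab])
  have hlower : (b - a) * g a ≤ ∫ t in a..b, g t := by
    simpa [mul_comm] using intervalIntegral.integral_mono_on hab intervalIntegrable_const hint
      fun t ht => hg ha ht ht.1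
  have hupper : ∫ t in a..b, g t ≤ (b - a) * g b := by
    simpa [mul_comm] using intervalIntegral.integral_mono_on hab hint intervalIntegrable_const
      fun t ht => hg ht hb ht.2
  have hMa := mul_le_mul_of_nonneg_right ((le_abs_self _).trans hca) hgab
  have hMb := mul_le_mul_of_nonneg_right ((neg_le_abs _).trans hcb) hgab
  rw [abs_le]
  constructor <;> linarith

theorem Monotone.abs_sum_div_sub_integral_le {N : ℕ} (hN : N ≠ 0) {y : Fin N → ℝ}
    (hy : Monotone y) (hy01 : ∀ i, y i ∈ Set.Icc 0 1) {g : ℝ → ℝ}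
    (hg : MonotoneOn g (Set.Icc 0 1)) :
    |(1 / N : ℝ) * ∑ i, g (y i) - ∫ t in (0 : ℝ)..1, g t| ≤ (g 1 - g 0) * starDisc1 N y := by
  set z := padPoints y with hz
  have hzm : Monotone z := monotone_padPoints hy hy01
  have hsub (k : ℕ) : Set.Icc (z k) (z (k + 1)) ⊆ Set.Icc 0 1 :=
    Set.Icc_subset_Icc (padPoints_mem_Icc hy01 k).1 (padPoints_mem_Icc hy01 (k + 1)).2
  have hint : ∑ k ∈ range (N + 1), ∫ t in z k..z (k + 1), g t = ∫ t in (0 : ℝ)..1, g t := by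
    rw [intervalIntegral.sum_integral_adjacent_intervals fun k _ => ?_, hz, padPoints_zero,
      padPoints_succ_self]
    refine MonotoneOn.intervalIntegrable ?_
    rw [Set.uIcc_of_le (hzm k.le_succ)]
    exact hg.mono (hsub k)
  rw [← sum_two_point_padPoints hN, ← hint, abs_sub_comm, ← sum_sub_distrib]
  calc _ ≤ ∑ k ∈ range (N + 1), starDisc1 N y * (g (z (k + 1)) - g (z k)) := by
        refine (abs_sum_le_sum_abs _ _).trans (sum_le_sum fun k hk => ?_)
        have hkN := Nat.lt_succ_iff.1 (mem_range.1 hk)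
        exact abs_integral_sub_two_point_le_of_monotoneOn (hzm k.le_succ) (hg.mono (hsub k))
          (abs_div_sub_padPoints_le hy hy01 hkN) (abs_div_sub_padPoints_succ_le hN hy hy01 hkN)
    _ = (g 1 - g 0) * starDisc1 N y := by
        rw [← mul_sum, sum_range_sub (fun k => g (z k)), hz, padPoints_zero, padPoints_succ_self,
          mul_comm]

/-- Koksma's inequality in dimension one: for `f : [0,1] → ℝ` of bounded variation,
`|(1/N) ∑ f(xᵢ) - ∫₀¹ f| ≤ V(f) · D*_N({x₁,...,x_N})`. -/
theorem koksma_inequality (N : ℕ) (hN : 0 < N) (x : Fin N → ℝ)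
    (hx : ∀ i, x i ∈ Set.Icc (0 : ℝ) 1) (f : ℝ → ℝ)
    (hf : BoundedVariationOn f (Set.Icc (0 : ℝ) 1)) :
    |(1 / N : ℝ) * ∑ i, f (x i) - ∫ t in (0 : ℝ)..1, f t| ≤
      (eVariationOn f (Set.Icc (0 : ℝ) 1)).toReal * starDisc1 N x := by
  obtain ⟨P, Q, hP, hQ, rfl, hPQ⟩ :=
    hf.locallyBoundedVariationOn.exists_monotoneOn_sub_monotoneOn'
  have h0 : (0 : ℝ) ∈ Set.Icc 0 1 := ⟨le_rfl, zero_le_one⟩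
  have h1 : (1 : ℝ) ∈ Set.Icc 0 1 := ⟨zero_le_one, le_rfl⟩
  have hvar : (eVariationOn (P - Q) (Set.Icc 0 1)).toReal = (P 1 - P 0) + (Q 1 - Q 0) := by
    rw [hPQ 0 h0 1 h1, variationOnFromTo.eq_of_le _ _ zero_le_one, Set.inter_self]
  have hint : ∫ t in (0 : ℝ)..1, (P - Q) t = (∫ t in (0 : ℝ)..1, P t) - ∫ t in (0 : ℝ)..1, Q t :=
    intervalIntegral.integral_sub
      (MonotoneOn.intervalIntegrable (by rwa [Set.uIcc_of_le zero_le_one]))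
      (MonotoneOn.intervalIntegrable (by rwa [Set.uIcc_of_le zero_le_one]))
  set σ := Tuple.sort x
  have hy : Monotone (x ∘ σ) := Tuple.monotone_sort x
  have hy01 (i : Fin N) : (x ∘ σ) i ∈ Set.Icc 0 1 := hx (σ i)
  rw [← Equiv.sum_comp σ, ← starDisc1_comp_perm x σ, hint, hvar]
  calc _ = |((1 / N : ℝ) * ∑ i, P ((x ∘ σ) i) - ∫ t in (0 : ℝ)..1, P t) -
        ((1 / N : ℝ) * ∑ i, Q ((x ∘ σ) i) - ∫ t in (0 : ℝ)..1, Q t)| := by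
        simp only [Pi.sub_apply, Function.comp_apply, sum_sub_distrib]
        ring_nf
    _ ≤ (P 1 - P 0) * starDisc1 N (x ∘ σ) + (Q 1 - Q 0) * starDisc1 N (x ∘ σ) :=
        (abs_sub _ _).trans (add_le_add (hy.abs_sum_div_sub_integral_le hN.ne' hy01 hP)
          (hy.abs_sum_div_sub_integral_le hN.ne' hy01 hQ))
    _ = _ := by ring
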